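/- Fix q ∈ ℂ and define g : {1,2,3,...} → ℂ recursively by g_n = 1 − ∑_{i=1}^{n−1} g_{n−i} q^{(n−i)i}. Then for every a ∈ ℂ and every integer n ≥ 1: B_{n,1}(a, aq) = g_n · a^{n−1}, where B_{n,1}(a,aq) are the expansion coefficients with parameters (a, aq) and base q. -/

import Mathlib

open PowerSeries

/-- The polynomial `(xz;q)_n = ∏_{i=0}^{n-1} (1 - x q^i z)` viewed in `ℂ[[z]]`. -/
noncomputable def qpoly (q x : ℂ) (n : ℕ) : PowerSeries ℂ :=
  ∏ i ∈ Finset.range n, (1 - PowerSeries.C (x * q ^ i) * PowerSeries.X)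

noncomputable def geomC (c : ℂ) : PowerSeries ℂ := PowerSeries.mk fun m => c ^ m

lemma one_sub_mul_geomC (c : ℂ) : (1 - C c * X) * geomC c = 1 := by
  ext m
  rcases m with _ | m
  · simp [geomC]
  · rw [sub_mul, one_mul, map_sub, mul_assoc, coeff_C_mul, coeff_succ_X_mul]
    simp [geomC, pow_succ, mul_comm]

lemma qpoly_const (q x : ℂ) (n : ℕ) : constantCoeff (qpoly q x n) = 1 := by
  simp [qpoly]

lemma qpoly_tel (q a : ℂ) (n : ℕ) :
    qpoly q a n * (1 - C (a * q ^ n) * X) = (1 - C (a * q ^ 0) * X) * qpoly q (a * q) n := by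
  have h1 : qpoly q a n * (1 - C (a * q ^ n) * X)
      = ∏ i ∈ Finset.range (n + 1), (1 - C (a * q ^ i) * X) := by
    rw [Finset.prod_range_succ, qpoly]
  have h2 : (1 - C (a * q ^ 0) * X) * qpoly q (a * q) n
      = ∏ i ∈ Finset.range (n + 1), (1 - C (a * q ^ i) * X) := by
    rw [Finset.prod_range_succ', qpoly, mul_comm]
    congr 1
    apply Finset.prod_congr rfl
    intro i _
    congr 2
    ring
  rw [h1, h2]

lemma qpoly_div (q a : ℂ) (n : ℕ) :
    qpoly q a n * (qpoly q (a * q) n)⁻¹ = (1 - C a * X) * geomC (a * q ^ n) := by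
  have hunit : qpoly q (a * q) n * (qpoly q (a * q) n)⁻¹ = 1 :=
    PowerSeries.mul_inv_cancel _ (by rw [qpoly_const]; exact one_ne_zero)
  have hg := one_sub_mul_geomC (a * q ^ n)
  have htel := qpoly_tel q a n
  calc qpoly q a n * (qpoly q (a * q) n)⁻¹
      = qpoly q a n * ((1 - C (a * q ^ n) * X) * geomC (a * q ^ n)) * (qpoly q (a * q) n)⁻¹ := by
        rw [hg, mul_one]
    _ = ((1 - C (a * q ^ 0) * X) * qpoly q (a * q) n) * geomC (a * q ^ n)
          * (qpoly q (a * q) n)⁻¹ := by rw [← mul_assoc, htel]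
    _ = (1 - C (a * q ^ 0) * X) * geomC (a * q ^ n)
          * (qpoly q (a * q) n * (qpoly q (a * q) n)⁻¹) := by ring
    _ = (1 - C a * X) * geomC (a * q ^ n) := by rw [hunit, mul_one, pow_zero, mul_one]

lemma coeff_one_sub_geom (a c : ℂ) (m : ℕ) (hm : 1 ≤ m) :
    coeff m ((1 - C a * X) * geomC c) = c ^ m - a * c ^ (m - 1) := by
  obtain ⟨k, rfl⟩ := Nat.exists_eq_add_of_le hm
  rw [sub_mul, one_mul, map_sub, mul_assoc, coeff_C_mul, add_comm 1 k, coeff_succ_X_mul]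
  simp [geomC]

lemma coeff_basis (q a : ℂ) (n N : ℕ) (_hn : 1 ≤ n) (hN : n ≤ N) :
    coeff N (X ^ n * qpoly q a n * (qpoly q (a * q) n)⁻¹) =
      if N = n then 1 else a ^ (N - n) * (q ^ (n * (N - n)) - q ^ (n * (N - n - 1))) := by
  rw [mul_assoc, qpoly_div]
  obtain ⟨m, rfl⟩ := Nat.exists_eq_add_of_le hN
  rw [add_comm n m, coeff_X_pow_mul]
  rcases Nat.eq_zero_or_pos m with rfl | hm
  · simp [geomC]
  · rw [if_neg (by omega), coeff_one_sub_geom _ _ _ hm]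
    have : m + n - n = m := by omega
    rw [this]
    rw [mul_pow, mul_pow, ← pow_mul, ← pow_mul]
    obtain ⟨j, rfl⟩ := Nat.exists_eq_add_of_le hm
    ring_nf
    rw [show 1 + j - 1 = j by omega]
lemma hg_reindex (g : ℕ → ℂ) (q : ℂ) (n : ℕ) :
    ∑ i ∈ Finset.Icc 1 (n - 1), g (n - i) * q ^ ((n - i) * i) =
      ∑ k ∈ Finset.Icc 1 (n - 1), g k * q ^ (k * (n - k)) := by
  apply Finset.sum_nbij' (i := fun i => n - i) (j := fun k => n - k)
  · intro i hi; simp only [Finset.mem_Icc] at *; omega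
  · intro i hi; simp only [Finset.mem_Icc] at *; omega
  · intro i hi; simp only [Finset.mem_Icc] at *; omega
  · intro i hi; simp only [Finset.mem_Icc] at *; omega
  · intro i hi
    simp only [Finset.mem_Icc] at hi
    rw [show n - (n - i) = i by omega]

lemma gsum (g : ℕ → ℂ) (q : ℂ)
    (hg : ∀ n : ℕ, 1 ≤ n →
      g n = 1 - ∑ i ∈ Finset.Icc 1 (n - 1), g (n - i) * q ^ ((n - i) * i))
    (m : ℕ) (hm : 1 ≤ m) :
    ∑ k ∈ Finset.Icc 1 m, g k * q ^ (k * (m - k)) = 1 := by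
  obtain ⟨t, rfl⟩ := Nat.exists_eq_succ_of_ne_zero (by omega : m ≠ 0)
  have h := hg (t + 1) (by omega)
  rw [hg_reindex] at h
  simp only [Nat.add_sub_cancel] at h
  rw [Finset.sum_Icc_succ_top (by omega : 1 ≤ t + 1)]
  simp only [Nat.sub_self, Nat.mul_zero, pow_zero, mul_one]
  rw [h]
  ring
lemma g_step (g : ℕ → ℂ) (q : ℂ)
    (hg : ∀ n : ℕ, 1 ≤ n →
      g n = 1 - ∑ i ∈ Finset.Icc 1 (n - 1), g (n - i) * q ^ ((n - i) * i))
    (m : ℕ) (hm : 1 ≤ m) :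
    g (m + 1) = -∑ k ∈ Finset.Icc 1 m, g k * (q ^ (k * (m + 1 - k)) - q ^ (k * (m - k))) := by
  have h1 := hg (m + 1) (by omega)
  rw [hg_reindex] at h1
  simp only [Nat.add_sub_cancel] at h1
  have h2 := gsum g q hg m hm
  simp only [mul_sub]
  rw [Finset.sum_sub_distrib]
  linear_combination h1 - h2

/-- With `g_n = 1 − ∑_{i=1}^{n−1} g_{n−i} q^{(n−i)i}`, the coefficients of the
expansion `z = ∑_{n≥1} B_{n,1}(a,aq) z^n (az;q)_n/(aqz;q)_n` are
`B_{n,1}(a,aq) = g_n a^{n−1}` for all `a` and all `n ≥ 1`. -/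
theorem B_a_aq_formula (q : ℂ)
    (g : ℕ → ℂ)
    (hg : ∀ n : ℕ, 1 ≤ n →
      g n = 1 - ∑ i ∈ Finset.Icc 1 (n - 1), g (n - i) * q ^ ((n - i) * i))
    (B : ℂ → ℕ → ℂ)
    (hB : ∀ a : ℂ, ∀ N : ℕ, 1 ≤ N →
      (PowerSeries.coeff N) (PowerSeries.X : PowerSeries ℂ) =
        ∑ n ∈ Finset.Icc 1 N,
          B a n * (PowerSeries.coeff N)
            (PowerSeries.X ^ n * qpoly q a n * (qpoly q (a * q) n)⁻¹)) :
    ∀ a : ℂ, ∀ n : ℕ, 1 ≤ n → B a n = g n * a ^ (n - 1) := by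
  intro a n
  induction n using Nat.strong_induction_on with
  | _ n ih =>
    intro hn
    obtain ⟨m, rfl⟩ := Nat.exists_eq_succ_of_ne_zero (by omega : n ≠ 0)
    have hBrec := hB a (m + 1) (by omega)
    rw [PowerSeries.coeff_X, Finset.sum_Icc_succ_top (by omega : 1 ≤ m + 1)] at hBrec
    rw [coeff_basis q a (m + 1) (m + 1) (by omega) le_rfl, if_pos rfl, mul_one] at hBrec
    have hsum : ∑ k ∈ Finset.Icc 1 m, B a k *
          coeff (m + 1) (X ^ k * qpoly q a k * (qpoly q (a * q) k)⁻¹)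
        = ∑ k ∈ Finset.Icc 1 m,
            g k * a ^ m * (q ^ (k * (m + 1 - k)) - q ^ (k * (m - k))) := by
      apply Finset.sum_congr rfl
      intro k hk
      simp only [Finset.mem_Icc] at hk
      rw [coeff_basis q a k (m + 1) (by omega) (by omega), if_neg (by omega),
        ih k (by omega) (by omega)]
      rw [show m + 1 - k - 1 = m - k by omega]
      rw [show (a : ℂ) ^ m = a ^ (k - 1) * a ^ (m + 1 - k) by rw [← pow_add]; congr 1; omega]
      ring
    rw [hsum] at hBrec
    rcases Nat.eq_zero_or_pos m with rfl | hm
    · have h1 : g 1 = 1 := by simpa using hg 1 le_rfl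
      simp only [Nat.zero_add, if_pos rfl] at hBrec
      simp only [Finset.Icc_self, Finset.Icc_eq_empty_of_lt (by omega : (1:ℕ) > 0)] at hBrec
      simp [h1]
      simpa using hBrec.symm
    · rw [if_neg (by omega)] at hBrec
      have hstep := g_step g q hg m hm
      have hB' : B a (m + 1) =
          -∑ k ∈ Finset.Icc 1 m, g k * a ^ m * (q ^ (k * (m + 1 - k)) - q ^ (k * (m - k))) := by
        linear_combination -hBrec
      rw [hB', hstep, show m + 1 - 1 = m from rfl, neg_mul, Finset.sum_mul]
      congr 1
      apply Finset.sum_congr rfl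
      intro k _
      ring
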